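/- Let D ≥ 1 be an integer, let ξ : ℝ_+^D → ℝ be locally Lipschitz, convex, ℝ_+^D-increasing with ξ(0) = 0, and let χ : ℝ_+^D → ℝ be ℝ_+^D-increasing and Lipschitz with Lipschitz constant L. Set C = sup{ |ξ(z)| : z ∈ ℝ_+^D, |z| ≤ L }. Then for all t, t' ≥ 0 and all x, x' ∈ ℝ_+^D, |S_tχ(x) − S_{t'}χ(x')| ≤ C·|t−t'| + L·|x−x'|. -/

import Mathlib

open MeasureTheory
open scoped NNReal

/-- The nonnegative orthant `ℝ_+^D` in `ℝ^D`. -/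
def orthant (D : ℕ) : Set (EuclideanSpace ℝ (Fin D)) := {x | ∀ i, 0 ≤ x i}

/-- The monotone conjugate `(tξ)*(y) = sup_{z ∈ ℝ_+^D} (z·y − tξ(z))`, valued in
`ℝ ∪ {+∞}` (formalized as `EReal`). -/
noncomputable def tConj (D : ℕ) (t : ℝ) (ξ : EuclideanSpace ℝ (Fin D) → ℝ)
    (y : EuclideanSpace ℝ (Fin D)) : EReal :=
  ⨆ z : orthant D, (((inner ℝ z.1 y : ℝ) - t * ξ z.1 : ℝ) : EReal)

/-- The Hopf–Lax value `S_tχ(x) = sup_{y ∈ ℝ_+^D} (χ(y) − (tξ)*(y−x))`, valued in `EReal`. -/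
noncomputable def hopfLax (D : ℕ) (t : ℝ) (ξ χ : EuclideanSpace ℝ (Fin D) → ℝ)
    (x : EuclideanSpace ℝ (Fin D)) : EReal :=
  ⨆ y : orthant D, ((χ y.1 : EReal) - tConj D t ξ (y.1 - x))

/-!
The supremum defining `S_tχ(x)` may be restricted to `y = x + u` with `u ≥ 0`: replacing `y` by
`x + (y - x)⁺` raises `χ(y)` and lowers `(tξ)*(y - x)`. In these variables `x` enters only through
`χ(x + u)`, which is `L`-Lipschitz. In time, `ξ ≥ 0` makes `S_tχ` increasing in `t`, and for
`t' = c t ≤ t` the competitor `x + c u` for `S_{t'}χ(x)` loses at most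
`(1 - c) (L |u| - (tξ)*(u))`, since `(t'ξ)*(c u) ≤ c (tξ)*(u)`; this is at most `(t - t') C`
because testing `(tξ)*(u)` against the point `L u / |u|` gives `(tξ)*(u) ≥ L |u| - t C`.
The bound `C` is finite since `ξ` is increasing: `0 ≤ ξ(z) ≤ ξ(L, …, L)` when `|z| ≤ L`.
-/

section

variable {D : ℕ}

lemma zero_mem_orthant : (0 : EuclideanSpace ℝ (Fin D)) ∈ orthant D := fun _ => le_rfl

lemma add_mem_orthant {a b : EuclideanSpace ℝ (Fin D)} (ha : a ∈ orthant D)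
    (hb : b ∈ orthant D) : a + b ∈ orthant D :=
  fun i => add_nonneg (ha i) (hb i)

lemma smul_mem_orthant {c : ℝ} (hc : 0 ≤ c) {a : EuclideanSpace ℝ (Fin D)}
    (ha : a ∈ orthant D) : c • a ∈ orthant D :=
  fun i => mul_nonneg hc (ha i)

noncomputable def orthantProj (w : EuclideanSpace ℝ (Fin D)) : EuclideanSpace ℝ (Fin D) :=
  WithLp.toLp 2 fun i => max (w i) 0

lemma orthantProj_mem (w : EuclideanSpace ℝ (Fin D)) : orthantProj w ∈ orthant D :=
  fun _ => le_max_right _ _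

lemma add_orthantProj_sub (x y : EuclideanSpace ℝ (Fin D)) :
    y + orthantProj (x - y) = orthantProj (y - x) + x := by
  ext i
  simp only [orthantProj, PiLp.add_apply, PiLp.sub_apply]
  rcases le_total (x i) (y i) with h | h
  · rw [max_eq_right (by linarith), max_eq_left (by linarith)]; ring
  · rw [max_eq_left (by linarith), max_eq_right (by linarith)]; ring

def OrthantIncreasing (f : EuclideanSpace ℝ (Fin D) → ℝ) : Prop :=
  ∀ x ∈ orthant D, ∀ y ∈ orthant D, f x ≤ f (x + y)

namespace OrthantIncreasing

variable {f : EuclideanSpace ℝ (Fin D) → ℝ}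

lemma nonneg (hf : OrthantIncreasing f) (h0 : f 0 = 0) {z : EuclideanSpace ℝ (Fin D)}
    (hz : z ∈ orthant D) : 0 ≤ f z := by
  simpa [h0] using hf 0 zero_mem_orthant z hz

lemma le_const_of_norm_le (hf : OrthantIncreasing f) {z : EuclideanSpace ℝ (Fin D)}
    (hz : z ∈ orthant D) {r : ℝ} (hzr : ‖z‖ ≤ r) : f z ≤ f (WithLp.toLp 2 fun _ => r) := by
  have hle : ∀ i, z i ≤ r := fun i =>
    (le_abs_self _).trans ((PiLp.norm_apply_le z i).trans hzr)
  have hsum : z + WithLp.toLp 2 (fun i => r - z i) = WithLp.toLp 2 fun _ => r := by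
    ext i; simp
  simpa [hsum] using hf z hz (WithLp.toLp 2 fun i => r - z i) fun i => sub_nonneg.2 (hle i)

lemma le_sSup_abs (hf : OrthantIncreasing f) (h0 : f 0 = 0) {r : ℝ}
    {z : EuclideanSpace ℝ (Fin D)} (hz : z ∈ orthant D) (hzr : ‖z‖ ≤ r) :
    f z ≤ sSup ((fun z => |f z|) '' (orthant D ∩ Metric.closedBall 0 r)) := by
  have hbdd : BddAbove ((fun z => |f z|) '' (orthant D ∩ Metric.closedBall 0 r)) := by
    refine ⟨f (WithLp.toLp 2 fun _ => r), ?_⟩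
    rintro _ ⟨w, ⟨hw, hwr⟩, rfl⟩
    dsimp only
    rw [abs_of_nonneg (hf.nonneg h0 hw)]
    exact hf.le_const_of_norm_le hw (by simpa using hwr)
  exact (le_abs_self _).trans (le_csSup hbdd ⟨z, ⟨hz, by simpa using hzr⟩, rfl⟩)

end OrthantIncreasing

variable {ξ : EuclideanSpace ℝ (Fin D) → ℝ} {t : ℝ}

lemma le_tConj {z w : EuclideanSpace ℝ (Fin D)} (hz : z ∈ orthant D) :
    ((inner ℝ z w - t * ξ z : ℝ) : EReal) ≤ tConj D t ξ w :=
  le_iSup (fun z : orthant D => ((inner ℝ z.1 w - t * ξ z.1 : ℝ) : EReal)) ⟨z, hz⟩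

lemma tConj_le {w : EuclideanSpace ℝ (Fin D)} {B : EReal}
    (h : ∀ z ∈ orthant D, ((inner ℝ z w - t * ξ z : ℝ) : EReal) ≤ B) : tConj D t ξ w ≤ B :=
  iSup_le fun z => h z.1 z.2

lemma tConj_zero (hξ : OrthantIncreasing ξ) (h0 : ξ 0 = 0) (ht : 0 ≤ t) :
    tConj D t ξ 0 = 0 := by
  refine le_antisymm (tConj_le fun z hz => ?_) ?_
  · have := mul_nonneg ht (hξ.nonneg h0 hz)
    rw [inner_zero_right, ← EReal.coe_zero, EReal.coe_le_coe_iff]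
    linarith
  · simpa [h0] using le_tConj (t := t) (ξ := ξ) (w := 0) zero_mem_orthant

lemma tConj_orthantProj_le (hξ : OrthantIncreasing ξ) (ht : 0 ≤ t)
    (w : EuclideanSpace ℝ (Fin D)) : tConj D t ξ (orthantProj w) ≤ tConj D t ξ w := by
  refine tConj_le fun z hz => ?_
  -- `z` only sees the coordinates where `w ≥ 0`; dropping the others lowers `ξ`.
  set z' : EuclideanSpace ℝ (Fin D) := WithLp.toLp 2 fun i => if 0 ≤ w i then z i else 0
  have hz' : z' ∈ orthant D := fun i => by
    simp only [z']; split_ifs <;> simp [hz i]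
  have hzz' : z - z' ∈ orthant D := fun i => by
    simp only [z', PiLp.sub_apply]; split_ifs <;> simp [hz i]
  have hinner : inner ℝ z (orthantProj w) = inner ℝ z' w := by
    simp only [orthantProj, z', PiLp.inner_apply, RCLike.inner_apply, conj_trivial]
    refine Finset.sum_congr rfl fun i _ => ?_
    by_cases h : 0 ≤ w i
    · simp [h]
    · simp [h, max_eq_right (le_of_not_ge h)]
  have hξz : ξ z' ≤ ξ z := by simpa using hξ z' hz' (z - z') hzz'
  refine le_trans ?_ (le_tConj hz')
  rw [EReal.coe_le_coe_iff, hinner]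
  nlinarith

lemma tConj_anti (hξ : OrthantIncreasing ξ) (h0 : ξ 0 = 0) {t' : ℝ} (htt : t' ≤ t)
    (w : EuclideanSpace ℝ (Fin D)) : tConj D t ξ w ≤ tConj D t' ξ w := by
  refine tConj_le fun z hz => le_trans ?_ (le_tConj hz)
  rw [EReal.coe_le_coe_iff]
  nlinarith [hξ.nonneg h0 hz]

lemma sub_mul_le_tConj {L : ℝ≥0} {C : ℝ} (hC : ∀ z ∈ orthant D, ‖z‖ ≤ L → ξ z ≤ C)
    (ht : 0 ≤ t) {u : EuclideanSpace ℝ (Fin D)} (hu : u ∈ orthant D) :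
    ((L * ‖u‖ - t * C : ℝ) : EReal) ≤ tConj D t ξ u := by
  -- the test point has norm `L` in the direction of `u`, and is `0` when `u = 0` (`L / 0 = 0`)
  set z := ((L : ℝ) / ‖u‖) • u
  have hz : z ∈ orthant D := smul_mem_orthant (by positivity) hu
  have hzL : ‖z‖ ≤ L := by
    rcases eq_or_ne ‖u‖ 0 with h | h
    · simp [z, h]
    · simp [z, norm_smul, h]
  have hinner : inner ℝ z u = L * ‖u‖ := by
    rcases eq_or_ne ‖u‖ 0 with h | h
    · simp [z, norm_eq_zero.1 h]
    · simp only [z, real_inner_smul_left, real_inner_self_eq_norm_sq]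
      field_simp
  refine le_trans ?_ (le_tConj hz)
  rw [EReal.coe_le_coe_iff, hinner]
  nlinarith [hC z hz hzL]

lemma tConj_smul_le {c : ℝ} (hc : 0 ≤ c) {u : EuclideanSpace ℝ (Fin D)} {A : ℝ}
    (h : tConj D t ξ u ≤ A) : tConj D (c * t) ξ (c • u) ≤ ((c * A : ℝ) : EReal) := by
  refine tConj_le fun z hz => ?_
  have hz' := EReal.coe_le_coe_iff.1 ((le_tConj hz).trans h)
  rw [EReal.coe_le_coe_iff, real_inner_smul_right]
  nlinarith

variable {χ : EuclideanSpace ℝ (Fin D) → ℝ} {x : EuclideanSpace ℝ (Fin D)}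

lemma sub_tConj_le_hopfLax (hx : x ∈ orthant D) {u : EuclideanSpace ℝ (Fin D)}
    (hu : u ∈ orthant D) : (χ (u + x) : EReal) - tConj D t ξ u ≤ hopfLax D t ξ χ x := by
  have h := le_iSup (fun y : orthant D => (χ y.1 : EReal) - tConj D t ξ (y.1 - x))
    ⟨u + x, add_mem_orthant hu hx⟩
  rwa [add_sub_cancel_right] at h

lemma hopfLax_le_of_forall (hξ : OrthantIncreasing ξ) (hχ : OrthantIncreasing χ) (ht : 0 ≤ t)
    {B : EReal} (h : ∀ u ∈ orthant D, (χ (u + x) : EReal) - tConj D t ξ u ≤ B) :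
    hopfLax D t ξ χ x ≤ B := by
  refine iSup_le fun ⟨y, hy⟩ => le_trans ?_ (h _ (orthantProj_mem (y - x)))
  refine EReal.sub_le_sub ?_ (tConj_orthantProj_le hξ ht (y - x))
  rw [EReal.coe_le_coe_iff, ← add_orthantProj_sub]
  exact hχ y hy _ (orthantProj_mem _)

lemma hopfLax_le_hopfLax_add_dist (hξ : OrthantIncreasing ξ) (hχ : OrthantIncreasing χ)
    {L : ℝ≥0} (hχL : LipschitzOnWith L χ (orthant D)) (ht : 0 ≤ t) {x' : EuclideanSpace ℝ (Fin D)}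
    (hx : x ∈ orthant D) (hx' : x' ∈ orthant D) :
    hopfLax D t ξ χ x ≤ hopfLax D t ξ χ x' + ((L * ‖x - x'‖ : ℝ) : EReal) := by
  refine hopfLax_le_of_forall hξ hχ ht fun u hu => ?_
  have hχu : χ (u + x) ≤ χ (u + x') + L * ‖x - x'‖ := by
    simpa [dist_eq_norm] using
      hχL.le_add_mul (add_mem_orthant hu hx) (add_mem_orthant hu hx')
  calc (χ (u + x) : EReal) - tConj D t ξ u
      ≤ ((χ (u + x') : EReal) + ((L * ‖x - x'‖ : ℝ) : EReal)) - tConj D t ξ u :=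
        EReal.sub_le_sub (by exact_mod_cast hχu) le_rfl
    _ = ((χ (u + x') : EReal) - tConj D t ξ u) + ((L * ‖x - x'‖ : ℝ) : EReal) := by
        simp only [sub_eq_add_neg, add_right_comm]
    _ ≤ hopfLax D t ξ χ x' + ((L * ‖x - x'‖ : ℝ) : EReal) :=
        add_le_add_left (sub_tConj_le_hopfLax hx' hu) _

lemma hopfLax_mono (hξ : OrthantIncreasing ξ) (h0 : ξ 0 = 0) {t' : ℝ} (htt : t' ≤ t) :
    hopfLax D t' ξ χ x ≤ hopfLax D t ξ χ x :=
  iSup_mono fun _ => EReal.sub_le_sub le_rfl (tConj_anti hξ h0 htt _)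

lemma sub_tConj_le_smul {L : ℝ≥0} {C : ℝ} (hC : ∀ z ∈ orthant D, ‖z‖ ≤ L → ξ z ≤ C)
    (hχL : LipschitzOnWith L χ (orthant D)) (ht : 0 ≤ t) (hx : x ∈ orthant D)
    {u : EuclideanSpace ℝ (Fin D)} (hu : u ∈ orthant D) {c : ℝ} (hc0 : 0 ≤ c) (hc1 : c ≤ 1) :
    (χ (u + x) : EReal) - tConj D t ξ u ≤
      ((χ (c • u + x) : EReal) - tConj D (c * t) ξ (c • u)) + ((C * (t - c * t) : ℝ) : EReal) := by
  have hlow := sub_mul_le_tConj hC ht hu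
  rcases eq_or_ne (tConj D t ξ u) ⊤ with htop | htop
  · simp [htop]
  obtain ⟨A, hA⟩ : ∃ A : ℝ, tConj D t ξ u = A :=
    ⟨_, (EReal.coe_toReal htop (ne_bot_of_le_ne_bot (EReal.coe_ne_bot _) hlow)).symm⟩
  rw [hA, EReal.coe_le_coe_iff] at hlow
  have hscale : tConj D (c * t) ξ (c • u) ≤ ((c * A : ℝ) : EReal) := tConj_smul_le hc0 hA.le
  have hχu : χ (u + x) ≤ χ (c • u + x) + L * ((1 - c) * ‖u‖) := by
    have h := hχL.le_add_mul (add_mem_orthant hu hx)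
      (add_mem_orthant (smul_mem_orthant hc0 hu) hx)
    have hsub : u - c • u = (1 - c) • u := by rw [sub_smul, one_smul]
    rwa [dist_eq_norm, add_sub_add_right_eq_sub, hsub, norm_smul,
      Real.norm_of_nonneg (sub_nonneg.2 hc1)] at h
  have hreal : χ (u + x) - A ≤ (χ (c • u + x) - c * A) + C * (t - c * t) := by
    nlinarith [mul_le_mul_of_nonneg_left hlow (sub_nonneg.2 hc1)]
  rw [hA]
  calc (χ (u + x) : EReal) - A = ((χ (u + x) - A : ℝ) : EReal) := rfl
    _ ≤ ((χ (c • u + x) : EReal) - ((c * A : ℝ) : EReal)) + ((C * (t - c * t) : ℝ) : EReal) :=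
        by exact_mod_cast hreal
    _ ≤ _ := add_le_add_left (EReal.sub_le_sub le_rfl hscale) _

lemma hopfLax_le_hopfLax_add_mul_sub (hξ : OrthantIncreasing ξ) (hχ : OrthantIncreasing χ)
    {L : ℝ≥0} {C : ℝ} (hC : ∀ z ∈ orthant D, ‖z‖ ≤ L → ξ z ≤ C)
    (hχL : LipschitzOnWith L χ (orthant D)) {t' : ℝ} (ht' : 0 ≤ t') (htt : t' ≤ t)
    (hx : x ∈ orthant D) :
    hopfLax D t ξ χ x ≤ hopfLax D t' ξ χ x + ((C * (t - t') : ℝ) : EReal) := by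
  have ht := ht'.trans htt
  obtain ⟨c, hc0, hc1, rfl⟩ : ∃ c, 0 ≤ c ∧ c ≤ 1 ∧ c * t = t' := by
    rcases ht.eq_or_lt with h | h
    · exact ⟨0, le_rfl, zero_le_one, by linarith⟩
    · exact ⟨t' / t, div_nonneg ht' h.le, (div_le_one h).2 htt, div_mul_cancel₀ _ h.ne'⟩
  refine hopfLax_le_of_forall hξ hχ ht fun u hu =>
    (sub_tConj_le_smul hC hχL ht hx hu hc0 hc1).trans ?_
  exact add_le_add_left (sub_tConj_le_hopfLax hx (smul_mem_orthant hc0 hu)) _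

lemma coe_toReal_hopfLax (hξ : OrthantIncreasing ξ) (h0 : ξ 0 = 0) (hχ : OrthantIncreasing χ)
    {L : ℝ≥0} {C : ℝ} (hC : ∀ z ∈ orthant D, ‖z‖ ≤ L → ξ z ≤ C)
    (hχL : LipschitzOnWith L χ (orthant D)) (ht : 0 ≤ t) (hx : x ∈ orthant D) :
    ((hopfLax D t ξ χ x).toReal : EReal) = hopfLax D t ξ χ x := by
  have hge : (χ x : EReal) ≤ hopfLax D t ξ χ x := by
    simpa [tConj_zero hξ h0 ht] using
      sub_tConj_le_hopfLax (t := t) (ξ := ξ) (χ := χ) hx zero_mem_orthant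
  have hle : hopfLax D t ξ χ x ≤ ((χ x + C * t : ℝ) : EReal) := by
    refine hopfLax_le_of_forall hξ hχ ht fun u hu =>
      (sub_tConj_le_smul hC hχL ht hx hu le_rfl zero_le_one).trans ?_
    simp [tConj_zero hξ h0 le_rfl]
  exact EReal.coe_toReal (ne_top_of_le_ne_top (EReal.coe_ne_top _) hle)
    (ne_bot_of_le_ne_bot (EReal.coe_ne_bot _) hge)

lemma abs_toReal_hopfLax_sub_le_of_time (hξ : OrthantIncreasing ξ) (h0 : ξ 0 = 0)
    (hχ : OrthantIncreasing χ) {L : ℝ≥0} {C : ℝ} (hC : ∀ z ∈ orthant D, ‖z‖ ≤ L → ξ z ≤ C)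
    (hχL : LipschitzOnWith L χ (orthant D)) {t' : ℝ} (ht : 0 ≤ t) (ht' : 0 ≤ t')
    (hx : x ∈ orthant D) :
    |(hopfLax D t ξ χ x).toReal - (hopfLax D t' ξ χ x).toReal| ≤ C * |t - t'| := by
  wlog htt : t' ≤ t generalizing t t'
  · rw [abs_sub_comm, abs_sub_comm t]
    exact this ht' ht (le_of_not_ge htt)
  have hmono := hopfLax_mono (χ := χ) (x := x) hξ h0 htt
  have hlip := hopfLax_le_hopfLax_add_mul_sub hξ hχ hC hχL ht' htt hx
  rw [← coe_toReal_hopfLax hξ h0 hχ hC hχL ht hx,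
    ← coe_toReal_hopfLax hξ h0 hχ hC hχL ht' hx] at hmono hlip
  rw [abs_of_nonneg (sub_nonneg.2 (EReal.coe_le_coe_iff.1 hmono)),
    abs_of_nonneg (sub_nonneg.2 htt), sub_le_iff_le_add']
  exact_mod_cast hlip

lemma abs_toReal_hopfLax_sub_le_of_space (hξ : OrthantIncreasing ξ) (h0 : ξ 0 = 0)
    (hχ : OrthantIncreasing χ) {L : ℝ≥0} {C : ℝ} (hC : ∀ z ∈ orthant D, ‖z‖ ≤ L → ξ z ≤ C)
    (hχL : LipschitzOnWith L χ (orthant D)) (ht : 0 ≤ t) {x' : EuclideanSpace ℝ (Fin D)}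
    (hx : x ∈ orthant D) (hx' : x' ∈ orthant D) :
    |(hopfLax D t ξ χ x).toReal - (hopfLax D t ξ χ x').toReal| ≤ L * ‖x - x'‖ := by
  have h₁ := hopfLax_le_hopfLax_add_dist hξ hχ hχL ht hx hx'
  have h₂ := hopfLax_le_hopfLax_add_dist hξ hχ hχL ht hx' hx
  rw [← coe_toReal_hopfLax hξ h0 hχ hC hχL ht hx,
    ← coe_toReal_hopfLax hξ h0 hχ hC hχL ht hx'] at h₁ h₂
  rw [norm_sub_rev] at h₂
  rw [abs_sub_le_iff, sub_le_iff_le_add', sub_le_iff_le_add']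
  exact ⟨by exact_mod_cast h₁, by exact_mod_cast h₂⟩

end

theorem hopfLax_lipschitz_general (D : ℕ)
    (ξ : EuclideanSpace ℝ (Fin D) → ℝ)
    (hξmono : ∀ x ∈ orthant D, ∀ y ∈ orthant D, ξ x ≤ ξ (x + y))
    (hξ0 : ξ 0 = 0)
    (χ : EuclideanSpace ℝ (Fin D) → ℝ) (L : ℝ≥0)
    (hχmono : ∀ x ∈ orthant D, ∀ y ∈ orthant D, χ x ≤ χ (x + y))
    (hχlip : LipschitzOnWith L χ (orthant D))
    (C : ℝ)
    (hC : C = sSup ((fun z => |ξ z|) '' (orthant D ∩ Metric.closedBall 0 (L : ℝ))))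
    (t t' : ℝ) (ht : 0 ≤ t) (ht' : 0 ≤ t')
    (x x' : EuclideanSpace ℝ (Fin D)) (hx : x ∈ orthant D) (hx' : x' ∈ orthant D) :
    ∃ a b : ℝ, hopfLax D t ξ χ x = (a : EReal) ∧ hopfLax D t' ξ χ x' = (b : EReal) ∧
      |a - b| ≤ C * |t - t'| + (L : ℝ) * ‖x - x'‖ := by
  have hCξ : ∀ z ∈ orthant D, ‖z‖ ≤ L → ξ z ≤ C := fun z hz hzL =>
    hC ▸ OrthantIncreasing.le_sSup_abs hξmono hξ0 hz hzL
  refine ⟨_, _, (coe_toReal_hopfLax hξmono hξ0 hχmono hCξ hχlip ht hx).symm,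
    (coe_toReal_hopfLax hξmono hξ0 hχmono hCξ hχlip ht' hx').symm, ?_⟩
  calc _ ≤ |(hopfLax D t ξ χ x).toReal - (hopfLax D t' ξ χ x).toReal|
        + |(hopfLax D t' ξ χ x).toReal - (hopfLax D t' ξ χ x').toReal| := abs_sub_le _ _ _
    _ ≤ C * |t - t'| + L * ‖x - x'‖ := add_le_add
        (abs_toReal_hopfLax_sub_le_of_time hξmono hξ0 hχmono hCξ hχlip ht ht' hx)
        (abs_toReal_hopfLax_sub_le_of_space hξmono hξ0 hχmono hCξ hχlip ht' hx hx')

/-- for `ξ` locally Lipschitz, convex, `ℝ_+^D`-increasing with `ξ(0) = 0` and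
`χ` `ℝ_+^D`-increasing and `L`-Lipschitz, with `C = sup{|ξ(z)| : z ∈ ℝ_+^D, |z| ≤ L}`, the
Hopf–Lax values are (finite and) satisfy
`|S_tχ(x) − S_{t'}χ(x')| ≤ C·|t−t'| + L·|x−x'|`. -/
theorem hopfLax_lipschitz (D : ℕ) (hD : 1 ≤ D)
    (ξ : EuclideanSpace ℝ (Fin D) → ℝ)
    (hξloc : ∀ x ∈ orthant D, ∃ (K' : ℝ≥0) (ε : ℝ), 0 < ε ∧
      LipschitzOnWith K' ξ (orthant D ∩ Metric.ball x ε))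
    (hξconv : ConvexOn ℝ (orthant D) ξ)
    (hξmono : ∀ x ∈ orthant D, ∀ y ∈ orthant D, ξ x ≤ ξ (x + y))
    (hξ0 : ξ 0 = 0)
    (χ : EuclideanSpace ℝ (Fin D) → ℝ) (L : ℝ≥0)
    (hχmono : ∀ x ∈ orthant D, ∀ y ∈ orthant D, χ x ≤ χ (x + y))
    (hχlip : LipschitzOnWith L χ (orthant D))
    (C : ℝ)
    (hC : C = sSup ((fun z => |ξ z|) '' (orthant D ∩ Metric.closedBall 0 (L : ℝ))))
    (t t' : ℝ) (ht : 0 ≤ t) (ht' : 0 ≤ t')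
    (x x' : EuclideanSpace ℝ (Fin D)) (hx : x ∈ orthant D) (hx' : x' ∈ orthant D) :
    ∃ a b : ℝ, hopfLax D t ξ χ x = (a : EReal) ∧ hopfLax D t' ξ χ x' = (b : EReal) ∧
      |a - b| ≤ C * |t - t'| + (L : ℝ) * ‖x - x'‖ :=
  hopfLax_lipschitz_general D ξ hξmono hξ0 χ L hχmono hχlip C hC t t' ht ht' x x' hx hx'
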